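/- arXiv:0810.4062 — 4 statements merged into one kernel-verified Lean document; each statement's English description precedes it below -/
import Mathlib

section
/- If H1 and H2 are finite k-uniform hypergraphs such that hom(F,H1) = hom(F,H2) for every finite k-uniform hypergraph F, then H1 and H2 are isomorphic. -/
open Finset

/-- A `k`-uniform hypergraph on a finite vertex set `V`: an `S_k`-invariant set of
`k`-tuples of vertices with no repeated coordinates. -/
structure HyperGraph (k : ℕ) (V : Type) [DecidableEq V] [Fintype V] where
  edges : Finset (Fin k → V)
  perm_mem : ∀ σ : Equiv.Perm (Fin k), ∀ e ∈ edges, e ∘ σ ∈ edges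
  edge_inj : ∀ e ∈ edges, Function.Injective e

variable {k : ℕ} {V W : Type} [DecidableEq V] [Fintype V] [DecidableEq W] [Fintype W]

/-- `f : V(F) → V(H)` is a homomorphism if it maps edges to edges. -/
def IsHom (F : HyperGraph k V) (H : HyperGraph k W) (f : V → W) : Prop :=
  ∀ e ∈ F.edges, f ∘ e ∈ H.edges

/-- `hom(F,H)`: the number of homomorphisms from `F` to `H`. -/
noncomputable def homCount (F : HyperGraph k V) (H : HyperGraph k W) : ℕ :=
  letI := Classical.decPred (IsHom F H)
  (Finset.univ.filter (IsHom F H)).card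

/-- `hom⁰(F,H)`: the number of injective homomorphisms from `F` to `H`. -/
noncomputable def injHomCount (F : HyperGraph k V) (H : HyperGraph k W) : ℕ :=
  letI : DecidablePred (fun f : V → W => IsHom F H f ∧ Function.Injective f) :=
    Classical.decPred _
  (Finset.univ.filter (fun f : V → W => IsHom F H f ∧ Function.Injective f)).card

noncomputable instance : Fintype (Finpartition (Finset.univ : Finset V)) :=
  Fintype.ofInjective Finpartition.parts (fun P Q h => by cases P; cases Q; congr)

/-- The quotient hypergraph `F(𝒫)` is `k`-uniform iff every partition class meets every
edge in at most one vertex, i.e. the quotient map is injective on every edge. -/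
def QuotUniform (F : HyperGraph k V) (P : Finpartition (Finset.univ : Finset V)) : Prop :=
  ∀ e ∈ F.edges, Function.Injective (fun j => P.part (e j))

/-- The quotient hypergraph `F(𝒫)` on the classes of the partition `𝒫`, defined when it is
`k`-uniform: its edges are the images of the edges of `F` under the quotient map. -/
def quotHG (F : HyperGraph k V) (P : Finpartition (Finset.univ : Finset V))
    (h : QuotUniform F P) : HyperGraph k {s // s ∈ P.parts} where
  edges := F.edges.image
    (fun e j => (⟨P.part (e j), P.part_mem.2 (Finset.mem_univ _)⟩ : {s // s ∈ P.parts}))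
  perm_mem := by
    intro σ q hq
    simp only [Finset.mem_image] at hq ⊢
    obtain ⟨e, he, rfl⟩ := hq
    exact ⟨e ∘ σ, F.perm_mem σ e he, rfl⟩
  edge_inj := by
    intro q hq
    simp only [Finset.mem_image] at hq
    obtain ⟨e, he, rfl⟩ := hq
    intro a b hab
    exact h e he (by simpa using congrArg Subtype.val hab)

/-!
Sorting the homomorphisms `F → H` by their kernel partition `P` gives
`hom(F, H) = ∑_P inj(F(P), H)`, the sum running over the partitions whose quotient `F(P)` is
still `k`-uniform; the discrete partition contributes `inj(F, H)` and every other `F(P)` has fewer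
vertices than `F`. By induction on `|V(F)|`, equal homomorphism counts therefore give equal
injective homomorphism counts. Taking `F = H₁` and `F = H₂` yields injective homomorphisms in
both directions, so `|V(H₁)| = |V(H₂)|`, and an injective endomorphism of a finite hypergraph
permutes its finitely many edges, hence reflects them: `H₁ → H₂` is an isomorphism.
-/

namespace Finpartition

variable {α : Type*} [DecidableEq α] {s : Finset α}

theorem part_bot {a : α} (ha : a ∈ s) : (⊥ : Finpartition s).part a = {a} :=
  part_eq_of_mem _ (mem_bot_iff.2 ⟨a, ha, rfl⟩) (Finset.mem_singleton_self a)

theorem ext_part {P Q : Finpartition s} (h : ∀ a ∈ s, P.part a = Q.part a) : P = Q := by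
  suffices key : ∀ P Q : Finpartition s, (∀ a ∈ s, P.part a = Q.part a) → P.parts ⊆ Q.parts from
    Finpartition.ext (subset_antisymm (key P Q h) (key Q P fun a ha => (h a ha).symm))
  intro P Q h t ht
  obtain ⟨a, hat⟩ := P.nonempty_of_mem_parts ht
  have has : a ∈ s := P.le ht hat
  rw [← P.part_eq_of_mem ht hat, h a has]
  exact Q.part_mem.2 has

variable [Fintype α]

def quotMap (P : Finpartition (Finset.univ : Finset α)) (a : α) : {t // t ∈ P.parts} :=
  ⟨P.part a, P.part_mem.2 (Finset.mem_univ a)⟩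

theorem quotMap_surjective (P : Finpartition (Finset.univ : Finset α)) :
    Function.Surjective P.quotMap := by
  rintro ⟨t, ht⟩
  obtain ⟨a, -, hat⟩ := P.part_surjOn ht
  exact ⟨a, Subtype.ext hat⟩

theorem quotMap_bot_injective :
    Function.Injective (⊥ : Finpartition (Finset.univ : Finset α)).quotMap := by
  intro a b hab
  have := congrArg Subtype.val hab
  simpa [quotMap, part_bot] using this

open scoped Classical in
noncomputable def kerPartition {β : Type*} (f : α → β) : Finpartition (Finset.univ : Finset α) :=
  ofSetoid (Setoid.ker f)

variable {β : Type*} {f : α → β} {P : Finpartition (Finset.univ : Finset α)}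

theorem part_kerPartition_eq_iff {a b : α} :
    (kerPartition f).part a = (kerPartition f).part b ↔ f a = f b := by
  classical
  rw [← (kerPartition f).mem_part_iff_part_eq_part (Finset.mem_univ _) (Finset.mem_univ _),
    kerPartition, mem_part_ofSetoid_iff_rel]
  exact eq_comm

theorem kerPartition_eq_iff :
    kerPartition f = P ↔ ∀ a b, f a = f b ↔ P.quotMap a = P.quotMap b := by
  simp only [quotMap, Subtype.mk.injEq, ← part_kerPartition_eq_iff (f := f)]
  refine ⟨fun h => h ▸ fun _ _ => Iff.rfl, fun h => ext_part fun a _ => ?_⟩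
  ext b
  rw [(kerPartition f).mem_part_iff_part_eq_part (Finset.mem_univ _) (Finset.mem_univ _),
    P.mem_part_iff_part_eq_part (Finset.mem_univ _) (Finset.mem_univ _), eq_comm, h, eq_comm]

theorem kerPartition_quotMap : kerPartition P.quotMap = P :=
  kerPartition_eq_iff.2 fun _ _ => Iff.rfl

theorem kerPartition_eq_bot_iff : kerPartition f = ⊥ ↔ Function.Injective f := by
  simp only [kerPartition_eq_iff, quotMap_bot_injective.eq_iff]
  exact ⟨fun h a b => (h a b).1, fun hf a b => hf.eq_iff⟩

theorem card_parts_lt_of_ne_bot (hP : P ≠ ⊥) : P.parts.card < Fintype.card α := by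
  refine lt_of_le_of_ne P.card_parts_le_card fun hcard => hP ?_
  have hbij : Function.Bijective P.quotMap :=
    (Fintype.bijective_iff_surjective_and_card _).2 ⟨P.quotMap_surjective, by simp [hcard]⟩
  rw [← kerPartition_quotMap (P := P), kerPartition_eq_bot_iff]
  exact hbij.1

end Finpartition

open Finpartition

variable {U : Type} [DecidableEq U] [Fintype U]

theorem isHom_id (F : HyperGraph k V) : IsHom F F id :=
  fun _ he => he

theorem IsHom.comp {F : HyperGraph k V} {G : HyperGraph k W} {H : HyperGraph k U}
    {g : W → U} {f : V → W} (hg : IsHom G H g) (hf : IsHom F G f) : IsHom F H (g ∘ f) :=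
  fun e he => hg _ (hf e he)

theorem injHomCount_pos_iff {F : HyperGraph k V} {H : HyperGraph k W} :
    0 < injHomCount F H ↔ ∃ f, IsHom F H f ∧ Function.Injective f := by
  simp [injHomCount, Finset.card_pos, Finset.filter_nonempty_iff]

theorem injHomCount_self_pos (F : HyperGraph k V) : 0 < injHomCount F F :=
  injHomCount_pos_iff.2 ⟨id, isHom_id F, Function.injective_id⟩

theorem IsHom.comp_mem_edges_iff {H : HyperGraph k V} {f : V → V} (hf : IsHom H H f)
    (hinj : Function.Injective f) (e : Fin k → V) : f ∘ e ∈ H.edges ↔ e ∈ H.edges := by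
  let push : (Fin k → V) ↪ (Fin k → V) := ⟨(f ∘ ·), hinj.comp_left⟩
  have himage : H.edges.map push = H.edges :=
    Finset.eq_of_subset_of_card_le (fun _ hq => by
      obtain ⟨e, he, rfl⟩ := Finset.mem_map.1 hq
      exact hf e he) (Finset.card_map push).ge
  calc f ∘ e ∈ H.edges ↔ push e ∈ H.edges.map push := by rw [himage]; rfl
    _ ↔ e ∈ H.edges := Finset.mem_map' push

theorem exists_iso_of_injective_homs {H₁ : HyperGraph k V} {H₂ : HyperGraph k W}
    {g₁ : V → W} {g₂ : W → V} (hg₁ : IsHom H₁ H₂ g₁) (hi₁ : Function.Injective g₁)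
    (hg₂ : IsHom H₂ H₁ g₂) (hi₂ : Function.Injective g₂) :
    ∃ e : V ≃ W, ∀ f : Fin k → V, f ∈ H₁.edges ↔ (⇑e ∘ f) ∈ H₂.edges := by
  have hbij : Function.Bijective g₁ := (Fintype.bijective_iff_injective_and_card g₁).2
    ⟨hi₁, le_antisymm (Fintype.card_le_of_injective g₁ hi₁) (Fintype.card_le_of_injective g₂ hi₂)⟩
  refine ⟨Equiv.ofBijective g₁ hbij, fun f => ⟨hg₁ f, fun hf => ?_⟩⟩
  exact ((hg₂.comp hg₁).comp_mem_edges_iff (hi₂.comp hi₁) f).1 (hg₂ _ hf)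

def HyperGraph.reindex (F : HyperGraph k V) (φ : V ≃ U) : HyperGraph k U where
  edges := F.edges.image (⇑φ ∘ ·)
  perm_mem σ _ hq := by
    obtain ⟨e, he, rfl⟩ := Finset.mem_image.1 hq
    exact Finset.mem_image.2 ⟨e ∘ σ, F.perm_mem σ e he, rfl⟩
  edge_inj _ hq := by
    obtain ⟨e, he, rfl⟩ := Finset.mem_image.1 hq
    exact φ.injective.comp (F.edge_inj e he)

theorem isHom_reindex_iff {F : HyperGraph k V} {H : HyperGraph k W} {φ : V ≃ U} {g : U → W} :
    IsHom (F.reindex φ) H g ↔ IsHom F H (g ∘ φ) := by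
  simp only [IsHom, HyperGraph.reindex, Finset.forall_mem_image]
  rfl

theorem homCount_reindex (F : HyperGraph k V) (H : HyperGraph k W) (φ : V ≃ U) :
    homCount (F.reindex φ) H = homCount F H := by
  refine Finset.card_equiv (φ.arrowCongr (Equiv.refl W)).symm fun g => ?_
  simp only [Finset.mem_filter, Finset.mem_univ, true_and, isHom_reindex_iff]
  rfl

theorem homCount_eq_of_forall_fin {H₁ : HyperGraph k V} {H₂ : HyperGraph k W}
    (h : ∀ (n : ℕ) (F : HyperGraph k (Fin n)), homCount F H₁ = homCount F H₂)
    (F : HyperGraph k U) : homCount F H₁ = homCount F H₂ := by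
  rw [← homCount_reindex F H₁ (Fintype.equivFin U), ← homCount_reindex F H₂ (Fintype.equivFin U)]
  exact h _ _

theorem isHom_quotHG_iff {F : HyperGraph k V} {H : HyperGraph k W}
    {P : Finpartition (Finset.univ : Finset V)} (hP : QuotUniform F P)
    {g : {t // t ∈ P.parts} → W} :
    IsHom (quotHG F P hP) H g ↔ IsHom F H (g ∘ P.quotMap) := by
  simp only [IsHom, quotHG, Finset.forall_mem_image]
  rfl

theorem quotUniform_kerPartition {F : HyperGraph k V} {H : HyperGraph k W} {f : V → W}
    (hf : IsHom F H f) : QuotUniform F (kerPartition f) :=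
  fun e he _ _ hij => H.edge_inj _ (hf e he) ((part_kerPartition_eq_iff (f := f)).1 hij)

section Kernel

open scoped Classical

variable (F : HyperGraph k V) (H : HyperGraph k W)

noncomputable def homsWithKernel (P : Finpartition (Finset.univ : Finset V)) : Finset (V → W) :=
  Finset.univ.filter fun f => IsHom F H f ∧ kerPartition f = P

theorem homCount_eq_sum_card_homsWithKernel :
    homCount F H = ∑ P, (homsWithKernel F H P).card := by
  rw [homCount, Finset.card_eq_sum_card_fiberwise fun f _ => Finset.mem_univ (kerPartition f)]
  simp only [homsWithKernel, Finset.filter_filter]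

theorem card_homsWithKernel_bot : (homsWithKernel F H ⊥).card = injHomCount F H := by
  simp only [homsWithKernel, injHomCount, kerPartition_eq_bot_iff]
  convert rfl

theorem homsWithKernel_eq_empty {P : Finpartition (Finset.univ : Finset V)}
    (hP : ¬ QuotUniform F P) : homsWithKernel F H P = ∅ :=
  Finset.filter_eq_empty_iff.2 fun _ _ ⟨hf, hker⟩ => hP (hker ▸ quotUniform_kerPartition hf)

/-- A homomorphism with kernel `P` factors uniquely through `quotMap P`, injectively. -/
theorem card_homsWithKernel {P : Finpartition (Finset.univ : Finset V)} (hP : QuotUniform F P) :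
    (homsWithKernel F H P).card = injHomCount (quotHG F P hP) H := by
  have hπ := P.quotMap_surjective
  symm
  refine Finset.card_nbij (· ∘ P.quotMap) (fun g hg => ?_)
    (fun g _ g' _ h => hπ.injective_comp_right h) (fun f hf => ?_)
  · simp only [Finset.coe_filter, Finset.mem_univ, true_and, Set.mem_ofPred_eq] at hg
    simp only [homsWithKernel, Finset.coe_filter, Finset.mem_univ, true_and, Set.mem_ofPred_eq]
    exact ⟨(isHom_quotHG_iff hP).1 hg.1, kerPartition_eq_iff.2 fun a b => hg.2.eq_iff⟩
  · simp only [homsWithKernel, Finset.coe_filter, Finset.mem_univ, true_and,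
      Set.mem_ofPred_eq] at hf
    obtain ⟨hhom, hker⟩ := hf
    have hfactor : (f ∘ Function.surjInv hπ) ∘ P.quotMap = f :=
      funext fun a => (kerPartition_eq_iff.1 hker _ _).2 (Function.surjInv_eq hπ _)
    refine ⟨f ∘ Function.surjInv hπ, ?_, hfactor⟩
    simp only [Finset.coe_filter, Finset.mem_univ, true_and, Set.mem_ofPred_eq]
    refine ⟨(isHom_quotHG_iff hP).2 (by rwa [hfactor]), fun s t hst => ?_⟩
    rw [← Function.surjInv_eq hπ s, ← Function.surjInv_eq hπ t]
    exact (kerPartition_eq_iff.1 hker _ _).1 hst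

end Kernel

theorem injHomCount_eq_of_homCount_eq {H₁ : HyperGraph k V} {H₂ : HyperGraph k W}
    (h : ∀ (U : Type) [DecidableEq U] [Fintype U] (F : HyperGraph k U),
      homCount F H₁ = homCount F H₂)
    (F : HyperGraph k U) : injHomCount F H₁ = injHomCount F H₂ := by
  induction hn : Fintype.card U using Nat.strong_induction_on generalizing U with
  | _ n ih =>
  have hsum := h U F
  rw [homCount_eq_sum_card_homsWithKernel, homCount_eq_sum_card_homsWithKernel,
    ← Finset.add_sum_erase _ _ (Finset.mem_univ ⊥),
    ← Finset.add_sum_erase _ _ (Finset.mem_univ ⊥)] at hsum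
  rw [← card_homsWithKernel_bot, ← card_homsWithKernel_bot]
  refine Nat.add_right_cancel (hsum.trans (congrArg _ (Finset.sum_congr rfl fun P hP => ?_)))
  by_cases hu : QuotUniform F P
  · rw [card_homsWithKernel F H₂ hu, card_homsWithKernel F H₁ hu]
    refine (ih _ ?_ _ rfl).symm
    simpa [hn] using card_parts_lt_of_ne_bot (Finset.ne_of_mem_erase hP)
  · rw [homsWithKernel_eq_empty F H₁ hu, homsWithKernel_eq_empty F H₂ hu, Finset.card_empty,
      Finset.card_empty]

/-- If two finite `k`-uniform hypergraphs receive the same number of homomorphisms from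
every finite `k`-uniform hypergraph, then they are isomorphic. -/
theorem iso_of_homCount_eq (H₁ : HyperGraph k V) (H₂ : HyperGraph k W)
    (h : ∀ (n : ℕ) (F : HyperGraph k (Fin n)), homCount F H₁ = homCount F H₂) :
    ∃ e : V ≃ W, ∀ f : Fin k → V, f ∈ H₁.edges ↔ (⇑e ∘ f) ∈ H₂.edges := by
  have hhom : ∀ (U : Type) [DecidableEq U] [Fintype U] (F : HyperGraph k U),
      homCount F H₁ = homCount F H₂ := fun _ _ _ F => homCount_eq_of_forall_fin h F
  obtain ⟨g₁, hg₁, hi₁⟩ := injHomCount_pos_iff.1 <|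
    injHomCount_eq_of_homCount_eq hhom H₁ ▸ injHomCount_self_pos H₁
  obtain ⟨g₂, hg₂, hi₂⟩ := injHomCount_pos_iff.1 <|
    (injHomCount_eq_of_homCount_eq hhom H₂).symm ▸ injHomCount_self_pos H₂
  exact exists_iso_of_injective_homs hg₁ hi₁ hg₂ hi₂
end

section
/- Let X be the ultraproduct of finite sets X_i with respect to a nonprincipal ultrafilter ω, and let P be the Boolean algebra of ultraproduct (internal) subsets with the finitely additive measure μ(A) = lim_ω |A_i|/|X_i|. If {A_k} is a countable family of sets in P with lim_{l→∞} μ(A_1 ∪ ⋯ ∪ A_l) = t, then there exists B ∈ P with μ(B) = t and A_k ⊆ B for all k. -/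
open Filter Set

/-- The equivalence relation of `ω`-almost-everywhere equality on `∏ᵢ Xᵢ`. -/
def upSetoid (X : ℕ → Type) (ω : Ultrafilter ℕ) : Setoid (∀ i, X i) where
  r p q := {i | p i = q i} ∈ ω
  iseqv := by
    refine ⟨fun p => ?_, fun {p q} h => ?_, fun {p q r} h₁ h₂ => ?_⟩
    · simp only [eq_self_iff_true, Set.setOf_true]
      exact Filter.univ_mem
    · exact Filter.mem_of_superset h (fun i hi => hi.symm)
    · exact Filter.mem_of_superset (Filter.inter_mem h₁ h₂)
        (fun i hi => hi.1.trans hi.2)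

/-- The ultraproduct `X = (∏ᵢ Xᵢ)/∼` of the sets `Xᵢ` along the ultrafilter `ω`. -/
def UProd (X : ℕ → Type) (ω : Ultrafilter ℕ) : Type := Quotient (upSetoid X ω)

/-- The internal (ultraproduct) subset `[{Aᵢ}] ⊆ X` determined by sets `Aᵢ ⊆ Xᵢ`. -/
def internalSet (X : ℕ → Type) (ω : Ultrafilter ℕ) (A : ∀ i, Finset (X i)) :
    Set (UProd X ω) :=
  {x | Quotient.liftOn x (fun p => {i | p i ∈ A i} ∈ ω) (by
    intro p q h
    refine propext ⟨fun hp => ?_, fun hq => ?_⟩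
    · exact Filter.mem_of_superset (Filter.inter_mem h hp)
        (fun i hi => by rw [Set.mem_setOf_eq, ← hi.1]; exact hi.2)
    · exact Filter.mem_of_superset (Filter.inter_mem h hq)
        (fun i hi => by rw [Set.mem_setOf_eq, hi.1]; exact hi.2))}

/-- The ultralimit of a real sequence along the ultrafilter `ω`. -/
noncomputable def ulim (ω : Ultrafilter ℕ) (a : ℕ → ℝ) : ℝ :=
  limUnder (ω : Filter ℕ) a

/-- The finitely additive measure of an internal set: `μ([{Aᵢ}]) = lim_ω |Aᵢ|/|Xᵢ|`. -/
noncomputable def intMeasure (X : ℕ → Type) [∀ i, Fintype (X i)] (ω : Ultrafilter ℕ)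
    (A : ∀ i, Finset (X i)) : ℝ :=
  ulim ω (fun i => ((A i).card : ℝ) / (Fintype.card (X i) : ℝ))

/-!
Write `Cₗ = A₀ ∪ ⋯ ∪ Aₗ`, so that `μ(Cₗ)` is the `ω`-limit of `|Cₗᵢ|/|Xᵢ|` and tends to `t`.
Let `g i` be the largest `l ≤ i` for which `|C_{l'}ᵢ|/|Xᵢ|` is `1/(l'+1)`-close to `μ(C_{l'})`
for all `l' ≤ l`. As `ω` is nonprincipal, `g i → ∞` along `ω`, and this diagonal choice makes
`|C_{g i}ᵢ|/|Xᵢ| → t` along `ω`. So `Bᵢ = C_{g i}ᵢ` has measure `t`, and since `g i ≥ m` for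
`ω`-almost every `i`, it contains `A_m`.
-/

open Topology

theorem exists_tendsto_diagonal {α : Type*} [PseudoMetricSpace α] {ω : Filter ℕ}
    (hω : ω ≤ atTop) {f : ℕ → ℕ → α} {μ : ℕ → α} {t : α}
    (hf : ∀ l, Tendsto (f l) ω (𝓝 (μ l))) (hμ : Tendsto μ atTop (𝓝 t)) :
    ∃ g : ℕ → ℕ, Tendsto g ω atTop ∧ Tendsto (fun i => f (g i) i) ω (𝓝 t) := by
  classical
  let P : ℕ → ℕ → Prop := fun i l => ∀ l' ≤ l, dist (f l' i) (μ l') < 1 / (l' + 1)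
  have hP : ∀ l, ∀ᶠ i in ω, P i l := fun l =>
    (eventually_all_finite (finite_Iic l)).2 fun l' _ =>
      hf l' (Metric.ball_mem_nhds _ (by positivity))
  let g : ℕ → ℕ := fun i => Nat.findGreatest (P i) i
  have hg : Tendsto g ω atTop := tendsto_atTop.2 fun m => by
    filter_upwards [hP m, hω (eventually_ge_atTop m)] with i hPi hmi
    exact Nat.le_findGreatest hmi hPi
  have hclose : ∀ᶠ i in ω, dist (f (g i) i) t ≤ 1 / (g i + 1) + dist (μ (g i)) t := by
    filter_upwards [hP 0] with i hPi
    have hPg : P i (g i) := Nat.findGreatest_spec (Nat.zero_le i) hPi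
    exact (dist_triangle _ _ _).trans (add_le_add (hPg _ le_rfl).le le_rfl)
  have hbound : Tendsto (fun l : ℕ => 1 / ((l : ℝ) + 1) + dist (μ l) t) atTop (𝓝 0) := by
    simpa using tendsto_one_div_add_atTop_nhds_zero_nat.add
      (tendsto_iff_dist_tendsto_zero.1 hμ)
  exact ⟨g, hg, tendsto_iff_dist_tendsto_zero.2 <|
    squeeze_zero' (Eventually.of_forall fun _ => dist_nonneg) hclose (hbound.comp hg)⟩

theorem card_div_card_mem_Icc {α : Type*} [Fintype α] (s : Finset α) :
    (s.card : ℝ) / Fintype.card α ∈ Icc (0 : ℝ) 1 :=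
  ⟨by positivity, div_le_one_of_le₀ (by exact_mod_cast s.card_le_univ) (by positivity)⟩

theorem tendsto_ulim_of_isCompact {ω : Ultrafilter ℕ} {a : ℕ → ℝ} {K : Set ℝ}
    (hK : IsCompact K) (ha : ∀ᶠ i in ω, a i ∈ K) : Tendsto a ω (𝓝 (ulim ω a)) := by
  obtain ⟨x, -, hx⟩ := hK.ultrafilter_le_nhds (ω.map a) (le_principal_iff.2 ha)
  have hax : Tendsto a ω (𝓝 x) := hx
  rwa [ulim, hax.limUnder_eq]

theorem tendsto_intMeasure (X : ℕ → Type) [∀ i, Fintype (X i)] (ω : Ultrafilter ℕ)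
    (A : ∀ i, Finset (X i)) :
    Tendsto (fun i => ((A i).card : ℝ) / Fintype.card (X i)) ω (𝓝 (intMeasure X ω A)) :=
  tendsto_ulim_of_isCompact isCompact_Icc
    (Eventually.of_forall fun i => card_div_card_mem_Icc (A i))

theorem internalSet_subset_of_eventually_subset {X : ℕ → Type} {ω : Ultrafilter ℕ}
    {A B : ∀ i, Finset (X i)} (h : ∀ᶠ i in ω, A i ⊆ B i) :
    internalSet X ω A ⊆ internalSet X ω B := by
  rintro ⟨p⟩ (hp : {i | p i ∈ A i} ∈ ω)
  show {i | p i ∈ B i} ∈ ω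
  filter_upwards [hp, h] with i hpi hAB
  exact hAB hpi

theorem internal_countable_union_bound_general (X : ℕ → Type) [∀ i, Fintype (X i)]
    [∀ i, DecidableEq (X i)]
    (ω : Ultrafilter ℕ) (hω : (ω : Filter ℕ) ≤ Filter.cofinite)
    (A : ℕ → ∀ i, Finset (X i)) (t : ℝ)
    (ht : Filter.Tendsto
      (fun l => intMeasure X ω (fun i => (Finset.range (l + 1)).biUnion (fun m => A m i)))
      Filter.atTop (nhds t)) :
    ∃ B : ∀ i, Finset (X i), intMeasure X ω B = t ∧
      ∀ m, internalSet X ω (A m) ⊆ internalSet X ω B := by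
  let C : ℕ → ∀ i, Finset (X i) := fun l i => (Finset.range (l + 1)).biUnion (fun m => A m i)
  obtain ⟨g, hg, hlim⟩ := exists_tendsto_diagonal (Nat.cofinite_eq_atTop ▸ hω)
    (fun l => tendsto_intMeasure X ω (C l)) ht
  refine ⟨fun i => C (g i) i, hlim.limUnder_eq,
    fun m => internalSet_subset_of_eventually_subset ?_⟩
  filter_upwards [hg.eventually_ge_atTop m] with i hmi
  exact Finset.subset_biUnion_of_mem (fun k => A k i) (Finset.mem_range_succ_iff.2 hmi)

/-- Let `X` be the ultraproduct of finite sets `Xᵢ` (of strictly increasing cardinality)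
along a nonprincipal ultrafilter `ω`.  If `{A_k}` is a countable family of internal sets
with `lim_{l→∞} μ(A_0 ∪ ⋯ ∪ A_l) = t`, then there is an internal set `B` with `μ(B) = t`
containing all the `A_k`. -/
theorem internal_countable_union_bound (X : ℕ → Type) [∀ i, Fintype (X i)]
    [∀ i, DecidableEq (X i)]
    (ω : Ultrafilter ℕ) (hω : (ω : Filter ℕ) ≤ Filter.cofinite)
    (hcard : StrictMono fun i => Fintype.card (X i))
    (A : ℕ → ∀ i, Finset (X i)) (t : ℝ)
    (ht : Filter.Tendsto
      (fun l => intMeasure X ω (fun i => (Finset.range (l + 1)).biUnion (fun m => A m i)))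
      Filter.atTop (nhds t)) :
    ∃ B : ∀ i, Finset (X i), intMeasure X ω B = t ∧
      ∀ m, internalSet X ω (A m) ⊆ internalSet X ω B :=
  internal_countable_union_bound_general X ω hω A t ht
end

section
/- Let Y ⊆ [0,1]^n be a Lebesgue measurable set that is independent from the σ-algebra A_{n-1} generated by the projection onto the first n-1 coordinates. Then there exist measurable sets X_k of the form X_k = ⋃_{j=1}^{n_k} (A_j^k × B_j^k), where A_1^k, …, A_{n_k}^k is a measurable partition of [0,1]^{n-1} and all B_j^k ⊆ [0,1] have Lebesgue measure equal to Vol(X_k), such that Vol(X_k △ Y) → 0 as k → ∞. -/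
/-!
Independence from the first factor says exactly that almost every vertical fibre `Y_x` has
measure `c = Vol(Y)`. The sets `⋃ i, A i ×ˢ C i` over finite measurable partitions `(A i)` of
the first factor form an algebra generating the product σ-algebra, so some such `X` is close to
`Y`. Replace each `C i` by a set `B i` of measure `c` that is a subset or a superset of `C i`,
giving `X' = ⋃ i, A i ×ˢ B i`: on the fibre over `x ∈ A i` this costs
`|Vol(C i) - c| = |Vol(C i) - Vol(Y_x)| ≤ Vol(C i ∆ Y_x)`, and integrating over `x` gives
`Vol(X' ∆ X) ≤ Vol(X ∆ Y)`, hence `Vol(X' ∆ Y) ≤ 2 Vol(X ∆ Y)`.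
-/

open MeasureTheory Set

/-- The probability measure on `[0,1]^{n-1} × [0,1]` (with `m = n - 1`), realized as the
product of Lebesgue measure restricted to the cube `[0,1]^{m}` and to `[0,1]`. -/
noncomputable def cubeMeasure (m : ℕ) : Measure ((Fin m → ℝ) × ℝ) :=
  ((volume : Measure (Fin m → ℝ)).restrict (Set.univ.pi fun _ => Icc (0:ℝ) 1)).prod
    ((volume : Measure ℝ).restrict (Icc (0:ℝ) 1))

open Function
open scoped ENNReal symmDiff

theorem mk_mem_iUnion_prod_iff {α β ι : Type*} {A : ι → Set α} {C : ι → Set β}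
    (hA : Pairwise (Disjoint on A)) {i : ι} {x : α} (hx : x ∈ A i) {y : β} :
    (x, y) ∈ ⋃ j, A j ×ˢ C j ↔ y ∈ C i := by
  simp only [mem_iUnion, mem_prod]
  refine ⟨fun ⟨j, hxj, hy⟩ => ?_, fun hy => ⟨i, hx, hy⟩⟩
  obtain rfl : j = i := by_contra fun hji => disjoint_left.mp (hA hji) hxj hx
  exact hy

theorem preimage_prodMk_iUnion_prod {α β ι : Type*} {A : ι → Set α} {C : ι → Set β}
    (hA : Pairwise (Disjoint on A)) {i : ι} {x : α} (hx : x ∈ A i) :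
    Prod.mk x ⁻¹' ⋃ j, A j ×ˢ C j = C i :=
  ext fun _ => mk_mem_iUnion_prod_iff hA hx

section BlockSets

variable {α β : Type*} [MeasurableSpace α] [MeasurableSpace β]

variable (α β) in
def blockSets : Set (Set (α × β)) :=
  {s | ∃ (ι : Type) (_ : Finite ι) (A : ι → Set α) (C : ι → Set β),
    (∀ i, MeasurableSet (A i)) ∧ (∀ i, MeasurableSet (C i)) ∧ Pairwise (Disjoint on A) ∧
      ⋃ i, A i = univ ∧ s = ⋃ i, A i ×ˢ C i}

theorem prod_mem_blockSets {A : Set α} {C : Set β} (hA : MeasurableSet A)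
    (hC : MeasurableSet C) : A ×ˢ C ∈ blockSets α β := by
  refine ⟨Bool, inferInstance, fun b => cond b A Aᶜ, fun b => cond b C ∅,
    Bool.forall_bool.2 ⟨hA.compl, hA⟩, Bool.forall_bool.2 ⟨.empty, hC⟩,
    pairwise_disjoint_on_bool.2 disjoint_compl_right, ?_, ?_⟩
  · rw [← union_eq_iUnion, union_compl_self]
  · ext
    simp [Bool.exists_bool]

theorem isSetAlgebra_blockSets : IsSetAlgebra (blockSets α β) where
  empty_mem := by
    simpa using prod_mem_blockSets (α := α) .univ (.empty : MeasurableSet (∅ : Set β))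
  compl_mem := by
    rintro _ ⟨ι, hι, A, C, hA, hC, hdisj, hcover, rfl⟩
    refine ⟨ι, hι, A, fun i => (C i)ᶜ, hA, fun i => (hC i).compl, hdisj, hcover, ?_⟩
    ext ⟨x, y⟩
    obtain ⟨i, hx⟩ := iUnion_eq_univ_iff.mp hcover x
    rw [mem_compl_iff, mk_mem_iUnion_prod_iff hdisj hx, mk_mem_iUnion_prod_iff hdisj hx,
      mem_compl_iff]
  union_mem := by
    rintro _ _ ⟨ι, hι, A, C, hA, hC, hdisj, hcover, rfl⟩
      ⟨κ, hκ, A', C', hA', hC', hdisj', hcover', rfl⟩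
    have hdisj'' : Pairwise (Disjoint on fun p : ι × κ => A p.1 ∩ A' p.2) := by
      rintro ⟨i, k⟩ ⟨i', k'⟩ hne
      rcases eq_or_ne i i' with rfl | hi
      · exact (hdisj' fun hk => hne (congrArg _ hk)).mono inter_subset_right inter_subset_right
      · exact (hdisj hi).mono inter_subset_left inter_subset_left
    refine ⟨ι × κ, inferInstance, fun p => A p.1 ∩ A' p.2, fun p => C p.1 ∪ C' p.2,
      fun p => (hA p.1).inter (hA' p.2), fun p => (hC p.1).union (hC' p.2), hdisj'',
      iUnion_eq_univ_iff.mpr fun x => ?_, ?_⟩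
    · obtain ⟨i, hi⟩ := iUnion_eq_univ_iff.mp hcover x
      obtain ⟨k, hk⟩ := iUnion_eq_univ_iff.mp hcover' x
      exact ⟨(i, k), hi, hk⟩
    ext ⟨x, y⟩
    obtain ⟨i, hi⟩ := iUnion_eq_univ_iff.mp hcover x
    obtain ⟨k, hk⟩ := iUnion_eq_univ_iff.mp hcover' x
    rw [mem_union, mk_mem_iUnion_prod_iff hdisj hi, mk_mem_iUnion_prod_iff hdisj' hk,
      mk_mem_iUnion_prod_iff (i := (i, k)) hdisj'' ⟨hi, hk⟩, mem_union]

theorem measurableSet_of_mem_blockSets {s : Set (α × β)} (hs : s ∈ blockSets α β) :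
    MeasurableSet s := by
  obtain ⟨ι, hι, A, C, hA, hC, -, -, rfl⟩ := hs
  exact .iUnion fun i => (hA i).prod (hC i)

theorem generateFrom_blockSets :
    MeasurableSpace.generateFrom (blockSets α β) = Prod.instMeasurableSpace := by
  refine le_antisymm (MeasurableSpace.generateFrom_le fun s => measurableSet_of_mem_blockSets) ?_
  rw [← generateFrom_prod]
  refine MeasurableSpace.generateFrom_mono ?_
  rintro _ ⟨A, hA, C, hC, rfl⟩
  exact prod_mem_blockSets hA hC

theorem exists_mem_blockSets_measure_symmDiff_lt (ρ : Measure (α × β)) [IsFiniteMeasure ρ]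
    {Y : Set (α × β)} (hY : MeasurableSet Y) {ε : ℝ≥0∞} (hε : 0 < ε) :
    ∃ X ∈ blockSets α β, ρ (X ∆ Y) < ε :=
  exists_measure_symmDiff_lt_of_generateFrom_isSetRing isSetAlgebra_blockSets.isSetRing
    ⟨{univ}, countable_singleton _, singleton_subset_iff.mpr isSetAlgebra_blockSets.univ_mem,
      by simp⟩ generateFrom_blockSets.symm hY hε

end BlockSets

theorem exists_subset_volume_eq {C : Set ℝ} {a b : ℝ} (hC : MeasurableSet C)
    (hCab : C ⊆ Icc a b) {r : ℝ≥0∞} (hr : r ≤ volume C) :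
    ∃ D ⊆ C, MeasurableSet D ∧ volume D = r := by
  have hCfin : volume C ≠ ∞ := ((measure_mono hCab).trans_lt measure_Icc_lt_top).ne
  have hfin : ∀ s, volume (C ∩ Iic s) ≠ ∞ := fun s =>
    ne_top_of_le_ne_top hCfin (measure_mono inter_subset_left)
  set f : ℝ → ℝ := fun s => volume.real (C ∩ Iic s)
  have hf : LipschitzWith 1 f := LipschitzWith.of_le_add fun s t => by
    have hsub : C ∩ Iic s ⊆ (C ∩ Iic t) ∪ Ioc t s := fun x ⟨hxC, hxs⟩ => by
      by_cases hxt : x ≤ t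
      exacts [Or.inl ⟨hxC, hxt⟩, Or.inr ⟨not_le.mp hxt, hxs⟩]
    calc f s ≤ volume.real ((C ∩ Iic t) ∪ Ioc t s) :=
          measureReal_mono hsub (measure_union_ne_top (hfin t) measure_Ioc_lt_top.ne)
      _ ≤ f t + volume.real (Ioc t s) := measureReal_union_le _ _
      _ ≤ f t + dist s t := by
          rw [Real.volume_real_Ioc, Real.dist_eq]
          gcongr
          exact max_le (le_abs_self _) (abs_nonneg _)
  have hfa : f a = 0 := (measureReal_eq_zero_iff (hfin a)).mpr <|
    measure_mono_null (fun x ⟨hxC, hxa⟩ => le_antisymm hxa (hCab hxC).1) (measure_singleton a)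
  have hCb : C ⊆ Iic b := fun x hx => (hCab hx).2
  have hfb : f b = volume.real C := by simp only [f, inter_eq_left.mpr hCb]
  obtain ⟨s, -, hs⟩ := intermediate_value_uIcc hf.continuous.continuousOn <|
    mem_uIcc_of_le (hfa ▸ ENNReal.toReal_nonneg) (by rw [hfb]; exact ENNReal.toReal_mono hCfin hr)
  exact ⟨C ∩ Iic s, inter_subset_left, hC.inter measurableSet_Iic,
    (ENNReal.toReal_eq_toReal_iff' (hfin s) (ne_top_of_le_ne_top hCfin hr)).mp hs⟩

theorem exists_measure_eq_forall_measure_symmDiff_le {β : Type*} [MeasurableSpace β]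
    {ν : Measure β} [IsFiniteMeasure ν] {S : Set β} (hSm : MeasurableSet S) (hS : ν Sᶜ = 0)
    (hsub : ∀ C, MeasurableSet C → ∀ r ≤ ν C, ∃ D ⊆ C ∩ S, MeasurableSet D ∧ ν D = r)
    {C : Set β} (hC : MeasurableSet C) {c : ℝ≥0∞} (hc : c ≤ ν univ) :
    ∃ B ⊆ S, MeasurableSet B ∧ ν B = c ∧ ∀ D, ν D = c → ν (B ∆ C) ≤ ν (D ∆ C) := by
  rcases le_total c (ν C) with hcC | hCc
  · obtain ⟨B, hBCS, hB, rfl⟩ := hsub C hC c hcC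
    have hBC : B ⊆ C := hBCS.trans inter_subset_left
    refine ⟨B, hBCS.trans inter_subset_right, hB, rfl, fun D hD => ?_⟩
    calc ν (B ∆ C) = ν C - ν D := by
          rw [symmDiff_of_le hBC, measure_sdiff hBC hB.nullMeasurableSet (measure_ne_top _ _), hD]
      _ ≤ ν (C ∆ D) := le_measure_symmDiff
      _ = ν (D ∆ C) := by rw [symmDiff_comm]
  · have hr : c - ν C ≤ ν Cᶜ := by
      rw [measure_compl hC (measure_ne_top _ _)]
      exact tsub_le_tsub_right hc _
    obtain ⟨E, hECS, hE, hνE⟩ := hsub Cᶜ hC.compl _ hr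
    have hEC : Disjoint (C ∩ S) E := disjoint_compl_right.mono inter_subset_left
      (hECS.trans inter_subset_left)
    refine ⟨(C ∩ S) ∪ E, union_subset inter_subset_right (hECS.trans inter_subset_right),
      (hC.inter hSm).union hE, ?_, fun D hD => ?_⟩
    · rw [measure_union hEC hE, measure_inter_conull hS, hνE, add_tsub_cancel_of_le hCc]
    have hsymm : ((C ∩ S) ∪ E) ∆ C ⊆ E ∪ Sᶜ := by
      intro x hx
      have hxE := @hECS x
      simp only [mem_symmDiff, mem_union, mem_inter_iff, mem_compl_iff] at hx hxE ⊢
      tauto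
    calc ν (((C ∩ S) ∪ E) ∆ C) ≤ ν E + ν Sᶜ := (measure_mono hsymm).trans (measure_union_le _ _)
      _ = ν D - ν C := by rw [hS, add_zero, hνE, hD]
      _ ≤ ν (D ∆ C) := le_measure_symmDiff

theorem exists_subset_inter_Icc_restrict_eq {a b : ℝ} {C : Set ℝ} (hC : MeasurableSet C)
    {r : ℝ≥0∞} (hr : r ≤ volume.restrict (Icc a b) C) :
    ∃ D ⊆ C ∩ Icc a b, MeasurableSet D ∧ volume.restrict (Icc a b) D = r := by
  rw [Measure.restrict_apply hC] at hr
  obtain ⟨D, hDC, hD, rfl⟩ :=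
    exists_subset_volume_eq (hC.inter measurableSet_Icc) inter_subset_right hr
  refine ⟨D, hDC, hD, ?_⟩
  rw [Measure.restrict_apply hD, inter_eq_left.mpr (hDC.trans inter_subset_right)]

section ProdMeasure

variable {α β : Type*} [MeasurableSpace α] [MeasurableSpace β] {μ : Measure α} {ν : Measure β}

theorem ae_measure_preimage_prodMk_eq [SigmaFinite μ] [SFinite ν] {Y : Set (α × β)}
    (hY : MeasurableSet Y) {c : ℝ≥0∞}
    (h : ∀ A, MeasurableSet A → μ.prod ν (Y ∩ A ×ˢ univ) = c * μ A) :
    ∀ᵐ x ∂μ, ν (Prod.mk x ⁻¹' Y) = c := by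
  refine ae_eq_of_forall_setLIntegral_eq_of_sigmaFinite (measurable_measure_prodMk_left hY)
    measurable_const fun A hA _ => ?_
  rw [setLIntegral_const, ← h A hA, ← Measure.restrict_apply hY,
    ← Measure.restrict_prod_eq_prod_univ, Measure.prod_apply hY]

variable [SFinite ν] {ι : Type*} [Countable ι] {A : ι → Set α}

theorem prod_iUnion_prod_of_measure_eq (hA : ∀ i, MeasurableSet (A i))
    (hdisj : Pairwise (Disjoint on A)) (hcover : ⋃ i, A i = univ) {B : ι → Set β}
    (hB : ∀ i, MeasurableSet (B i)) {c : ℝ≥0∞} (hνB : ∀ i, ν (B i) = c) :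
    μ.prod ν (⋃ i, A i ×ˢ B i) = c * μ univ := by
  rw [Measure.prod_apply (.iUnion fun i => (hA i).prod (hB i)), ← lintegral_const]
  refine lintegral_congr fun x => ?_
  obtain ⟨i, hi⟩ := iUnion_eq_univ_iff.mp hcover x
  rw [preimage_prodMk_iUnion_prod hdisj hi, hνB]

theorem prod_iUnion_prod_symmDiff_le (hA : ∀ i, MeasurableSet (A i))
    (hdisj : Pairwise (Disjoint on A)) (hcover : ⋃ i, A i = univ) {B C : ι → Set β}
    (hB : ∀ i, MeasurableSet (B i)) (hC : ∀ i, MeasurableSet (C i)) {Y : Set (α × β)}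
    (hY : MeasurableSet Y)
    (h : ∀ᵐ x ∂μ, ∀ i, x ∈ A i → ν (B i ∆ C i) ≤ ν ((Prod.mk x ⁻¹' Y) ∆ C i)) :
    μ.prod ν ((⋃ i, A i ×ˢ B i) ∆ ⋃ i, A i ×ˢ C i) ≤ μ.prod ν (Y ∆ ⋃ i, A i ×ˢ C i) := by
  have hmeas : ∀ D : ι → Set β, (∀ i, MeasurableSet (D i)) →
      MeasurableSet (⋃ i, A i ×ˢ D i) := fun D hD => .iUnion fun i => (hA i).prod (hD i)
  rw [Measure.prod_apply ((hmeas B hB).symmDiff (hmeas C hC)),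
    Measure.prod_apply (hY.symmDiff (hmeas C hC))]
  refine lintegral_mono_ae (h.mono fun x hx => ?_)
  obtain ⟨i, hi⟩ := iUnion_eq_univ_iff.mp hcover x
  simpa only [preimage_symmDiff, preimage_prodMk_iUnion_prod hdisj hi] using hx i hi

end ProdMeasure

theorem exists_blocks_measure_eq_symmDiff_lt {α β : Type*} [MeasurableSpace α]
    [MeasurableSpace β] {μ : Measure α} {ν : Measure β} [IsFiniteMeasure μ] [IsFiniteMeasure ν]
    {S : Set β} (hSm : MeasurableSet S) (hS : ν Sᶜ = 0)
    (hsub : ∀ C, MeasurableSet C → ∀ r ≤ ν C, ∃ D ⊆ C ∩ S, MeasurableSet D ∧ ν D = r)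
    {Y : Set (α × β)} (hY : MeasurableSet Y) {c : ℝ≥0∞} (hc : c ≤ ν univ)
    (hfib : ∀ᵐ x ∂μ, ν (Prod.mk x ⁻¹' Y) = c) {ε : ℝ≥0∞} (hε : 0 < ε) :
    ∃ (ι : Type) (_ : Finite ι) (A : ι → Set α) (B : ι → Set β),
      (∀ i, MeasurableSet (A i)) ∧ (∀ i, MeasurableSet (B i)) ∧ Pairwise (Disjoint on A) ∧
      ⋃ i, A i = univ ∧ (∀ i, B i ⊆ S) ∧ (∀ i, ν (B i) = c) ∧
      μ.prod ν ((⋃ i, A i ×ˢ B i) ∆ Y) < ε := by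
  obtain ⟨X, ⟨ι, hι, A, C, hA, hC, hdisj, hcover, rfl⟩, hXY⟩ :=
    exists_mem_blockSets_measure_symmDiff_lt (μ.prod ν) hY (ENNReal.half_pos hε.ne')
  choose B hBS hB hνB hnear using fun i =>
    exists_measure_eq_forall_measure_symmDiff_le hSm hS hsub (hC i) hc
  refine ⟨ι, hι, A, B, hA, hB, hdisj, hcover, hBS, hνB, ?_⟩
  have hclose := prod_iUnion_prod_symmDiff_le hA hdisj hcover hB hC hY
    (hfib.mono fun x hx i _ => hnear i _ hx)
  rw [symmDiff_comm Y] at hclose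
  calc μ.prod ν ((⋃ i, A i ×ˢ B i) ∆ Y)
      ≤ μ.prod ν ((⋃ i, A i ×ˢ B i) ∆ ⋃ i, A i ×ˢ C i) + μ.prod ν ((⋃ i, A i ×ˢ C i) ∆ Y) :=
        measure_symmDiff_le _ _ _
    _ < ε / 2 + ε / 2 := ENNReal.add_lt_add (hclose.trans_lt hXY) hXY
    _ = ε := ENNReal.add_halves ε

theorem approx_independent_by_blocks_general (m : ℕ) (Y : Set ((Fin m → ℝ) × ℝ))
    (hY : MeasurableSet Y)
    (hind : ∀ A : Set (Fin m → ℝ), MeasurableSet A →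
      cubeMeasure m (Y ∩ A ×ˢ (univ : Set ℝ)) =
        cubeMeasure m Y * cubeMeasure m (A ×ˢ (univ : Set ℝ))) :
    ∀ ε : ℝ, 0 < ε →
      ∃ (N : ℕ) (A : Fin N → Set (Fin m → ℝ)) (B : Fin N → Set ℝ),
        (∀ j, MeasurableSet (A j)) ∧ (∀ j, MeasurableSet (B j)) ∧
        Pairwise (fun i j => Disjoint (A i) (A j)) ∧
        (Set.univ.pi fun _ => Icc (0:ℝ) 1) ⊆ ⋃ j, A j ∧
        (∀ j, B j ⊆ Icc (0:ℝ) 1) ∧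
        (∀ j, volume (B j) = cubeMeasure m (⋃ j', A j' ×ˢ B j')) ∧
        cubeMeasure m (symmDiff (⋃ j, A j ×ˢ B j) Y) < ENNReal.ofReal ε := by
  intro ε hε
  set μ := volume.restrict (univ.pi fun _ : Fin m => Icc (0:ℝ) 1)
  set ν := volume.restrict (Icc (0:ℝ) 1)
  have hμ : μ univ = 1 := by simp [μ, Real.volume_Icc_pi]
  have hν : ν univ = 1 := by simp [ν]
  have : IsProbabilityMeasure μ := ⟨hμ⟩
  have : IsProbabilityMeasure ν := ⟨hν⟩
  have hfib : ∀ᵐ x ∂μ, ν (Prod.mk x ⁻¹' Y) = cubeMeasure m Y :=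
    ae_measure_preimage_prodMk_eq hY fun A hA => (hind A hA).trans <| congrArg _ <| by
      rw [cubeMeasure, Measure.prod_prod, hν, mul_one]
  have hYν : cubeMeasure m Y ≤ ν univ := hν ▸ prob_le_one (μ := μ.prod ν)
  obtain ⟨ι, _, A, B, hA, hB, hdisj, hcover, hBI, hνB, hlt⟩ :=
    exists_blocks_measure_eq_symmDiff_lt measurableSet_Icc
      (by simp [Measure.restrict_apply measurableSet_Icc.compl])
      (fun _ hC _ => exists_subset_inter_Icc_restrict_eq hC) hY hYν hfib
      (ENNReal.ofReal_pos.mpr hε)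
  have hvolB : ∀ i, volume (B i) = cubeMeasure m (⋃ i, A i ×ˢ B i) := fun i => by
    rw [cubeMeasure, prod_iUnion_prod_of_measure_eq hA hdisj hcover hB hνB, hμ, mul_one, ← hνB i,
      Measure.restrict_apply (hB i), inter_eq_left.mpr (hBI i)]
  obtain ⟨N, ⟨e⟩⟩ := Finite.exists_equiv_fin ι
  have hreindex : ∀ {γ : Type} (s : ι → Set γ), ⋃ j, s (e.symm j) = ⋃ i, s i :=
    fun s => e.symm.iSup_comp
  refine ⟨N, A ∘ e.symm, B ∘ e.symm, fun j => hA _, fun j => hB _,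
    hdisj.comp_of_injective e.symm.injective, ?_, fun j => hBI _, fun j => ?_, ?_⟩
  · simp only [comp_apply, hreindex, hcover, subset_univ]
  · simp only [comp_apply, hreindex (fun i => A i ×ˢ B i), hvolB]
  · simp only [comp_apply, hreindex (fun i => A i ×ˢ B i)]
    exact hlt

/-- If `Y ⊆ [0,1]^n = [0,1]^{n-1} × [0,1]` is measurable and independent from the σ-algebra
generated by the first `n-1` coordinates (i.e. `Vol(Y ∩ (A × [0,1])) = Vol(Y)·Vol(A × [0,1])`
for all measurable `A`), then `Y` can be approximated arbitrarily well in measure by sets of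
the form `⋃_j A_j × B_j` where the `A_j` form a measurable partition of `[0,1]^{n-1}` and
each `B_j ⊆ [0,1]` has Lebesgue measure equal to the measure of the approximating set. -/
theorem approx_independent_by_blocks (m : ℕ) (Y : Set ((Fin m → ℝ) × ℝ))
    (hY : MeasurableSet Y)
    (hYc : Y ⊆ (Set.univ.pi fun _ => Icc (0:ℝ) 1) ×ˢ Icc (0:ℝ) 1)
    (hind : ∀ A : Set (Fin m → ℝ), MeasurableSet A →
      cubeMeasure m (Y ∩ A ×ˢ (univ : Set ℝ)) =
        cubeMeasure m Y * cubeMeasure m (A ×ˢ (univ : Set ℝ))) :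
    ∀ ε : ℝ, 0 < ε →
      ∃ (N : ℕ) (A : Fin N → Set (Fin m → ℝ)) (B : Fin N → Set ℝ),
        (∀ j, MeasurableSet (A j)) ∧ (∀ j, MeasurableSet (B j)) ∧
        Pairwise (fun i j => Disjoint (A i) (A j)) ∧
        (Set.univ.pi fun _ => Icc (0:ℝ) 1) ⊆ ⋃ j, A j ∧
        (∀ j, B j ⊆ Icc (0:ℝ) 1) ∧
        (∀ j, volume (B j) = cubeMeasure m (⋃ j', A j' ×ˢ B j')) ∧
        cubeMeasure m (symmDiff (⋃ j, A j ×ˢ B j) Y) < ENNReal.ofReal ε :=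
  approx_independent_by_blocks_general m Y hY hind
end

section
/- Every separable atomless probability space (X,A,μ) admits a map f : X → [0,1] such that f^{-1}(Borel sets) ⊆ A, μ(f^{-1}(U)) = λ(U) for every Borel U ⊆ [0,1], and for every L ∈ A there exists a Borel set M ⊆ [0,1] with μ(L △ f^{-1}(M)) = 0. -/
/-!
A countable dense family `D` of measurable sets codes each point by the indicators of the
members of `D`, a point of the Cantor space `D → Bool`. Density makes every measurable set
almost everywhere a preimage under this coding, and, because `μ` is atomless, density also
forces every fiber of the coding to be null. Embedding the Cantor space into `ℝ` gives an
atomless law `ν`, whose distribution function `F` is then continuous: it carries `ν` to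
Lebesgue measure on `[0, 1]`, and every Borel set is `ν`-a.e. a preimage under `F` because
`Iic a ⊆ F⁻¹' (Iic (F a))` and both have measure `F a`.
-/

open MeasureTheory Set

/-- A probability space is *separable* if its measure algebra is separable: there is a
countable family of measurable sets approximating every measurable set in the
metric `d(A,B) = μ(A △ B)`. -/
def SeparableMeasureAlgebra {X : Type} [m : MeasurableSpace X] (μ : Measure X) : Prop :=
  ∃ D : Set (Set X), D.Countable ∧ (∀ d ∈ D, MeasurableSet d) ∧
    ∀ A : Set X, MeasurableSet A → ∀ ε : ℝ, 0 < ε →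
      ∃ d ∈ D, μ (symmDiff A d) < ENNReal.ofReal ε

/-- A probability space is *atomless* if every set of positive measure has a measurable
subset of strictly smaller positive measure. -/
def AtomlessSpace {X : Type} [m : MeasurableSpace X] (μ : Measure X) : Prop :=
  ∀ A : Set X, MeasurableSet A → 0 < μ A →
    ∃ B : Set X, B ⊆ A ∧ MeasurableSet B ∧ 0 < μ B ∧ μ B < μ A

open Filter ProbabilityTheory

def GeneratesModNull {X Y : Type*} [MeasurableSpace X] [MeasurableSpace Y] (μ : Measure X)
    (f : X → Y) : Prop :=
  ∀ L : Set X, MeasurableSet L → ∃ M : Set Y, MeasurableSet M ∧ L =ᵐ[μ] f ⁻¹' M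

def ApproximatesMeasurableSets {X : Type*} [MeasurableSpace X] (μ : Measure X)
    (D : Set (Set X)) : Prop :=
  ∀ A : Set X, MeasurableSet A → ∀ ε : ℝ, 0 < ε → ∃ d ∈ D, μ (symmDiff A d) < ENNReal.ofReal ε

section Preliminaries

variable {X Y : Type*} [MeasurableSpace X] [MeasurableSpace Y] {μ : Measure X}

theorem limsup_ae_eq_of_tsum_measure_symmDiff_ne_top {s : ℕ → Set X} {t : Set X}
    (h : ∑' k, μ (symmDiff t (s k)) ≠ ⊤) : (limsup s atTop : Set X) =ᵐ[μ] t := by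
  refine eventuallyEq_set.2 ?_
  filter_upwards [ae_eventually_notMem h] with x hx
  have hiff : ∀ᶠ k in atTop, x ∈ s k ↔ x ∈ t :=
    hx.mono fun k hk => by
      simp only [Set.mem_symmDiff, not_or, not_and, not_not] at hk
      exact ⟨hk.2, hk.1⟩
  rw [mem_limsup_iff_frequently_mem, frequently_congr hiff, frequently_const]

theorem nullSingletonClass_map [MeasurableSingletonClass Y] {f : X → Y} (hf : Measurable f)
    (h : ∀ y, μ (f ⁻¹' {y}) = 0) : NullSingletonClass (μ.map f) :=
  ⟨fun y => by rw [Measure.map_apply hf (measurableSet_singleton y)]; exact h y⟩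

theorem nullSingletonClass_map_of_injective [NullSingletonClass μ] [MeasurableSingletonClass Y]
    {f : X → Y} (hf : Measurable f) (hinj : Function.Injective f) :
    NullSingletonClass (μ.map f) :=
  nullSingletonClass_map hf fun _ => (subsingleton_singleton.preimage hinj).measure_zero μ

end Preliminaries

namespace GeneratesModNull

variable {X Y Z : Type*} [MeasurableSpace X] [MeasurableSpace Y] [MeasurableSpace Z]
  {μ : Measure X}

theorem of_measurableEmbedding {f : X → Y} (hf : MeasurableEmbedding f) :
    GeneratesModNull μ f :=
  fun L hL => ⟨f '' L, hf.measurableSet_image.2 hL, .of_eq (preimage_image_eq L hf.injective).symm⟩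

theorem comp {f : X → Y} {g : Y → Z} (hg : GeneratesModNull (μ.map f) g)
    (hf : GeneratesModNull μ f) (hfm : Measurable f) : GeneratesModNull μ (g ∘ f) := by
  intro L hL
  obtain ⟨M, hM, hLM⟩ := hf L hL
  obtain ⟨N, hN, hMN⟩ := hg M hM
  exact ⟨N, hN, hLM.trans (ae_of_ae_map hfm.aemeasurable hMN)⟩

theorem of_generateFrom {f : X → Y} {S : Set (Set X)}
    (hS : ‹MeasurableSpace X› = MeasurableSpace.generateFrom S)
    (h : ∀ s ∈ S, ∃ M : Set Y, MeasurableSet M ∧ s =ᵐ[μ] f ⁻¹' M) : GeneratesModNull μ f := by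
  intro L hL
  rw [hS] at hL
  induction L, hL using MeasurableSpace.generateFrom_induction with
  | hC s hs _ => exact h s hs
  | empty => exact ⟨∅, .empty, .of_eq preimage_empty.symm⟩
  | compl s _ ih =>
    obtain ⟨M, hM, hsM⟩ := ih
    exact ⟨Mᶜ, hM.compl, hsM.compl⟩
  | iUnion s _ ih =>
    choose M hM hsM using ih
    exact ⟨⋃ n, M n, .iUnion hM, by rw [preimage_iUnion]; exact .countable_iUnion hsM⟩

/-- Borel–Cantelli: approximations within `2⁻ᵏ` converge almost everywhere. -/
theorem of_forall_exists_measure_symmDiff_lt {f : X → Y}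
    (h : ∀ L, MeasurableSet L → ∀ ε : ℝ, 0 < ε →
      ∃ M : Set Y, MeasurableSet M ∧ μ (symmDiff L (f ⁻¹' M)) < ENNReal.ofReal ε) :
    GeneratesModNull μ f := by
  intro L hL
  choose M hM hLM using fun k : ℕ => h L hL ((1 / 2) ^ k) (by positivity)
  have hsum : ∑' k, μ (symmDiff L (f ⁻¹' M k)) ≠ ⊤ := by
    refine ne_top_of_le_ne_top ?_ (ENNReal.tsum_le_tsum fun k => (hLM k).le)
    rw [← ENNReal.ofReal_tsum_of_nonneg (fun k => by positivity)
      (summable_geometric_of_lt_one (by norm_num) (by norm_num))]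
    exact ENNReal.ofReal_ne_top
  have hpre : f ⁻¹' limsup M atTop = (limsup (fun k => f ⁻¹' M k) atTop : Set X) := by
    ext x
    simp only [mem_preimage, mem_limsup_iff_frequently_mem]
  refine ⟨limsup M atTop, MeasurableSet.measurableSet_limsup hM, ?_⟩
  rw [hpre]
  exact (limsup_ae_eq_of_tsum_measure_symmDiff_ne_top hsum).symm

end GeneratesModNull

theorem measure_eq_zero_of_forall_subset_or_disjoint {X : Type} [MeasurableSpace X]
    {μ : Measure X} [IsFiniteMeasure μ] (hatomless : AtomlessSpace μ) {D : Set (Set X)}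
    (hD : ApproximatesMeasurableSets μ D) {A : Set X} (hA : MeasurableSet A)
    (hsplit : ∀ d ∈ D, A ⊆ d ∨ Disjoint A d) : μ A = 0 := by
  by_contra hA0
  obtain ⟨B, hBA, hB, hB0, hBA'⟩ := hatomless A hA (pos_iff_ne_zero.2 hA0)
  have hAB0 : 0 < μ (A \ B) := by
    rw [measure_sdiff hBA hB.nullMeasurableSet (measure_ne_top μ B)]
    exact tsub_pos_of_lt hBA'
  -- a set this close to `B` meets `B` yet misses most of `A \ B`, so it splits `A`
  obtain ⟨d, hd, hBd⟩ := hD B hB (min (μ B).toReal (μ (A \ B)).toReal)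
    (lt_min (ENNReal.toReal_pos hB0.ne' (measure_ne_top μ _))
      (ENNReal.toReal_pos hAB0.ne' (measure_ne_top μ _)))
  rcases hsplit d hd with hAd | hAd
  · have hsub : A \ B ⊆ symmDiff B d := fun x hx => Or.inr ⟨hAd hx.1, hx.2⟩
    exact ((measure_mono hsub).trans_lt hBd).not_ge
      (ENNReal.ofReal_le_of_le_toReal (min_le_right _ _))
  · have hsub : B ⊆ symmDiff B d := fun x hx => Or.inl ⟨hx, hAd.notMem_of_mem_left (hBA hx)⟩
    exact ((measure_mono hsub).trans_lt hBd).not_ge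
      (ENNReal.ofReal_le_of_le_toReal (min_le_left _ _))

section MembershipCode

variable {X : Type} {D : Set (Set X)}

open Classical in
noncomputable def membershipCode (D : Set (Set X)) (x : X) : D → Bool :=
  fun d => decide (x ∈ (d : Set X))

theorem membershipCode_preimage_setOf_apply (d : D) :
    membershipCode D ⁻¹' {c | c d = true} = d := by
  ext x
  simp [membershipCode]

theorem subset_or_disjoint_of_membershipCode_preimage_singleton (c : D → Bool) (d : D) :
    membershipCode D ⁻¹' {c} ⊆ d ∨ Disjoint (membershipCode D ⁻¹' {c}) d := by
  cases hc : c d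
  · refine Or.inr (Set.disjoint_left.2 fun x hx hxd => ?_)
    rw [mem_preimage, mem_singleton_iff] at hx
    simp only [← hx, membershipCode, decide_eq_false_iff_not] at hc
    exact hc hxd
  · refine Or.inl fun x hx => ?_
    rw [mem_preimage, mem_singleton_iff] at hx
    simpa [← hx, membershipCode] using hc

variable [MeasurableSpace X] {μ : Measure X}

theorem measurable_membershipCode (hDm : ∀ d ∈ D, MeasurableSet d) :
    Measurable (membershipCode D) :=
  measurable_pi_lambda _ fun d => measurable_to_bool <| by
    change MeasurableSet (membershipCode D ⁻¹' {c | c d = true})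
    rw [membershipCode_preimage_setOf_apply]
    exact hDm d d.2

theorem measure_membershipCode_preimage_singleton [Countable D] [IsFiniteMeasure μ]
    (hatomless : AtomlessSpace μ) (hDm : ∀ d ∈ D, MeasurableSet d)
    (hD : ApproximatesMeasurableSets μ D) (c : D → Bool) : μ (membershipCode D ⁻¹' {c}) = 0 :=
  measure_eq_zero_of_forall_subset_or_disjoint hatomless hD
    (measurable_membershipCode hDm (measurableSet_singleton c))
    fun d hd => subset_or_disjoint_of_membershipCode_preimage_singleton c ⟨d, hd⟩

theorem generatesModNull_membershipCode (hD : ApproximatesMeasurableSets μ D) :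
    GeneratesModNull μ (membershipCode D) :=
  .of_forall_exists_measure_symmDiff_lt fun L hL ε hε => by
    obtain ⟨d, hd, hLd⟩ := hD L hL ε hε
    refine ⟨{c | c ⟨d, hd⟩ = true},
      measurableSet_eq_fun (measurable_pi_apply _) measurable_const, ?_⟩
    rwa [membershipCode_preimage_setOf_apply]

end MembershipCode

namespace ProbabilityTheory

variable (ν : Measure ℝ) [IsProbabilityMeasure ν] [NullSingletonClass ν]

theorem continuous_cdf : Continuous (cdf ν) := by
  refine continuous_iff_continuousAt.2 fun x => ?_
  have hjump : (cdf ν).measure {x} = ENNReal.ofReal (cdf ν x - Function.leftLim (cdf ν) x) :=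
    (cdf ν).measure_singleton x
  rw [measure_cdf, measure_singleton, eq_comm, ENNReal.ofReal_eq_zero, sub_nonpos] at hjump
  rw [(monotone_cdf ν).continuousAt_iff_leftLim_eq_rightLim, StieltjesFunction.rightLim_eq]
  exact le_antisymm ((monotone_cdf ν).leftLim_le le_rfl) hjump

theorem measure_cdf_preimage_Iic {t : ℝ} (ht0 : 0 ≤ t) (ht1 : t < 1) :
    ν (cdf ν ⁻¹' Iic t) = ENNReal.ofReal t := by
  refine le_antisymm ?_ ?_
  · rcases (cdf ν ⁻¹' Iic t).eq_empty_or_nonempty with hempty | hne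
    · simp [hempty]
    obtain ⟨b, hb⟩ := ((tendsto_cdf_atTop ν).eventually_const_lt ht1).exists
    have hbdd : BddAbove (cdf ν ⁻¹' Iic t) :=
      ⟨b, fun x hx => ((monotone_cdf ν).reflect_lt ((mem_Iic.1 hx).trans_lt hb)).le⟩
    have hclosed : IsClosed (cdf ν ⁻¹' Iic t) := isClosed_Iic.preimage (continuous_cdf ν)
    calc ν (cdf ν ⁻¹' Iic t) ≤ ν (Iic (sSup (cdf ν ⁻¹' Iic t))) :=
          measure_mono fun x hx => le_csSup hbdd hx
      _ = ENNReal.ofReal (cdf ν (sSup (cdf ν ⁻¹' Iic t))) := (ofReal_cdf ν _).symm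
      _ ≤ ENNReal.ofReal t := ENNReal.ofReal_le_ofReal (hclosed.csSup_mem hne hbdd)
  · rcases ht0.eq_or_lt with rfl | ht0
    · simp
    obtain ⟨x, hx⟩ : t ∈ range (cdf ν) :=
      mem_range_of_exists_le_of_exists_ge (continuous_cdf ν)
        ((tendsto_cdf_atBot ν).eventually_le_const ht0).exists
        ((tendsto_cdf_atTop ν).eventually_const_le ht1).exists
    calc ENNReal.ofReal t = ν (Iic x) := by rw [← hx, ofReal_cdf]
      _ ≤ ν (cdf ν ⁻¹' Iic t) := measure_mono fun y hy => (monotone_cdf ν hy).trans_eq hx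

theorem map_cdf : ν.map (cdf ν) = volume.restrict (Icc 0 1) := by
  refine Measure.ext_of_Iic _ _ fun t => ?_
  rw [Measure.map_apply (monotone_cdf ν).measurable measurableSet_Iic,
    Measure.restrict_apply measurableSet_Iic]
  rcases lt_or_ge t 0 with ht0 | ht0
  · have hpre : cdf ν ⁻¹' Iic t = ∅ :=
      eq_empty_of_forall_notMem fun x hx => (cdf_nonneg ν x).not_gt ((mem_Iic.1 hx).trans_lt ht0)
    have hinter : Iic t ∩ Icc (0 : ℝ) 1 = ∅ :=
      eq_empty_of_forall_notMem fun x hx => (hx.2.1.trans hx.1).not_gt ht0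
    rw [hpre, hinter, measure_empty, measure_empty]
  rcases lt_or_ge t 1 with ht1 | ht1
  · have hinter : Iic t ∩ Icc (0 : ℝ) 1 = Icc 0 t := by
      ext x
      simp only [mem_inter_iff, mem_Iic, mem_Icc]
      constructor
      · rintro ⟨hxt, hx0, -⟩; exact ⟨hx0, hxt⟩
      · rintro ⟨hx0, hxt⟩; exact ⟨hxt, hx0, hxt.trans ht1.le⟩
    rw [measure_cdf_preimage_Iic ν ht0 ht1, hinter, Real.volume_Icc, sub_zero]
  · have hpre : cdf ν ⁻¹' Iic t = univ :=
      eq_univ_of_forall fun x => (cdf_le_one ν x).trans ht1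
    have hinter : Iic t ∩ Icc (0 : ℝ) 1 = Icc 0 1 :=
      inter_eq_self_of_subset_right fun x hx => hx.2.trans ht1
    rw [hpre, hinter, measure_univ, Real.volume_Icc, sub_zero, ENNReal.ofReal_one]

theorem Iic_ae_eq_cdf_preimage_Iic_cdf (a : ℝ) : Iic a =ᵐ[ν] cdf ν ⁻¹' Iic (cdf ν a) := by
  refine ae_eq_of_subset_of_measure_ge (fun x hx => monotone_cdf ν hx) ?_
    measurableSet_Iic.nullMeasurableSet (measure_ne_top ν _)
  rw [← Measure.map_apply (monotone_cdf ν).measurable measurableSet_Iic, map_cdf,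
    Measure.restrict_apply measurableSet_Iic, ← ofReal_cdf]
  calc volume (Iic (cdf ν a) ∩ Icc 0 1) ≤ volume (Icc 0 (cdf ν a)) :=
        measure_mono fun y hy => ⟨hy.2.1, hy.1⟩
    _ = ENNReal.ofReal (cdf ν a) := by rw [Real.volume_Icc, sub_zero]

theorem generatesModNull_cdf : GeneratesModNull ν (cdf ν) :=
  .of_generateFrom (BorelSpace.measurable_eq.trans (borel_eq_generateFrom_Iic ℝ)) <| by
    rintro _ ⟨a, rfl⟩
    exact ⟨Iic (cdf ν a), measurableSet_Iic, Iic_ae_eq_cdf_preimage_Iic_cdf ν a⟩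

end ProbabilityTheory

theorem SeparableMeasureAlgebra.exists_measurable_generatesModNull_real {X : Type}
    [MeasurableSpace X] {μ : Measure X} [IsFiniteMeasure μ] (hsep : SeparableMeasureAlgebra μ)
    (hatomless : AtomlessSpace μ) :
    ∃ F : X → ℝ, Measurable F ∧ GeneratesModNull μ F ∧ NullSingletonClass (μ.map F) := by
  obtain ⟨D, hDc, hDm, hD⟩ := hsep
  have : Countable D := hDc.to_subtype
  have hg := measurable_membershipCode hDm
  obtain ⟨φ, hφ⟩ := exists_measurableEmbedding_real (D → Bool)
  refine ⟨φ ∘ membershipCode D, hφ.measurable.comp hg,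
    (GeneratesModNull.of_measurableEmbedding hφ).comp (generatesModNull_membershipCode hD) hg, ?_⟩
  have := nullSingletonClass_map hg (measure_membershipCode_preimage_singleton hatomless hDm hD)
  rw [← Measure.map_map hφ.measurable hg]
  exact nullSingletonClass_map_of_injective hφ.measurable hφ.injective

/-- Every separable atomless probability space `(X, 𝒜, μ)` admits a map `f : X → [0,1]`
such that `f⁻¹(Borel) ⊆ 𝒜`, `μ(f⁻¹(U)) = λ(U)` for every Borel `U ⊆ [0,1]`, and every
`L ∈ 𝒜` agrees, up to a null set, with `f⁻¹(M)` for some Borel `M ⊆ [0,1]`. -/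
theorem separable_atomless_realization {X : Type} [m : MeasurableSpace X] (μ : Measure X)
    [IsProbabilityMeasure μ] (hsep : SeparableMeasureAlgebra μ) (hatomless : AtomlessSpace μ) :
    ∃ f : X → ℝ, (∀ x, f x ∈ Icc (0:ℝ) 1) ∧
      (∀ U : Set ℝ, MeasurableSet U → MeasurableSet (f ⁻¹' U)) ∧
      (∀ U : Set ℝ, MeasurableSet U → U ⊆ Icc (0:ℝ) 1 → μ (f ⁻¹' U) = volume U) ∧
      (∀ L : Set X, MeasurableSet L →
        ∃ M : Set ℝ, MeasurableSet M ∧ M ⊆ Icc (0:ℝ) 1 ∧ μ (symmDiff L (f ⁻¹' M)) = 0) := by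
  obtain ⟨F, hF, hFgen, hν⟩ := hsep.exists_measurable_generatesModNull_real hatomless
  set ν := μ.map F
  have : IsProbabilityMeasure ν := Measure.isProbabilityMeasure_map hF.aemeasurable
  set f := cdf ν ∘ F
  have hf : Measurable f := (monotone_cdf ν).measurable.comp hF
  have hmap : μ.map f = volume.restrict (Icc 0 1) := by
    rw [← Measure.map_map (monotone_cdf ν).measurable hF, map_cdf]
  have hgen : GeneratesModNull μ f := (generatesModNull_cdf ν).comp hFgen hF
  have hIcc : ∀ x, f x ∈ Icc (0 : ℝ) 1 := fun x => ⟨cdf_nonneg ν _, cdf_le_one ν _⟩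
  refine ⟨f, hIcc, fun U hU => hf hU, fun U hU hUsub => ?_, fun L hL => ?_⟩
  · rw [← Measure.map_apply hf hU, hmap, Measure.restrict_apply hU, inter_eq_left.2 hUsub]
  · obtain ⟨M, hM, hLM⟩ := hgen L hL
    refine ⟨M ∩ Icc 0 1, hM.inter measurableSet_Icc, inter_subset_right, ?_⟩
    have hpre : f ⁻¹' Icc 0 1 = univ := eq_univ_of_forall hIcc
    rwa [measure_symmDiff_eq_zero_iff, preimage_inter, hpre, inter_univ]
end
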